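/- Let α : ℝ → ℝ be given by α(t) = t + 1, and let w be a continuous bounded positive function on ℝ for which there exist constants M, δ, K₁, K₂ > 0 with M − δ > 1 such that 1/M ≤ w(t) ≤ 1/(M−δ) for all t ≤ −K₁ and w(t) = 1 for all t ≥ K₂. Then the weighted composition operator T̃_{α,w} on C₀(ℝ), defined by T̃_{α,w}(f) = w·(f∘α), is topologically semi-transitive on C₀(ℝ) but is not topologically Cesàro hyper-transitive on C₀(ℝ). -/

import Mathlib

/-!
With `P n t = weightProd w n t = ∏_{j<n} w (t + j)` one has `(Tⁿ f) t = P n t * f (t + n)`.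

For compactly supported `f`, `Tⁿ f` only involves windows `[t, t + n)` ending left of a fixed
point; all but boundedly many of their factors lie in `(-∞, -K₁]`, where `w ≤ 1 / (M - δ) < 1`,
so `Tⁿ f → 0` geometrically. For compactly supported `g`, the exact preimage
`uₙ t = g (t - n) / P n (t - n)` only involves windows starting right of a fixed point; all but
boundedly many of their factors lie in `[K₂, ∞)`, where `w = 1`, so the `uₙ` are uniformly
bounded. Since compactly supported functions are dense, `f + λ⁻¹ uₙ` with `λ` large and then `n`
large witnesses semi-transitivity.

On the other hand `(Tⁿ f) K₂ = f (K₂ + n)`, so `n⁻¹ Tⁿ` maps the unit ball into functions of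
modulus less than `1` at `K₂`, and never comes near a `g` with `g K₂ = 3`.
-/

open scoped ZeroAtInfty

/-- A bounded linear operator `T` on a complex normed space is *topologically
semi-transitive* if for every pair of nonempty open subsets `O₁, O₂` there exist
`n ∈ ℕ` and `λ ∈ ℂ \ {0}` such that `λ • T^n(O₁) ∩ O₂ ≠ ∅`. -/
def IsSemiTransitive {E : Type*} [NormedAddCommGroup E] [NormedSpace ℂ E]
    (T : E →L[ℂ] E) : Prop :=
  ∀ O₁ O₂ : Set E, IsOpen O₁ → IsOpen O₂ → O₁.Nonempty → O₂.Nonempty →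
    ∃ (n : ℕ) (lam : ℂ), 1 ≤ n ∧ lam ≠ 0 ∧ ∃ f ∈ O₁, lam • (T ^ n) f ∈ O₂

/-- A bounded linear operator `T` on a complex normed space is *topologically Cesàro
hyper-transitive* if for every pair of nonempty open subsets `O₁, O₂` there exists a
strictly increasing sequence `(n_k)` of (positive) natural numbers such that
`n_k⁻¹ • T^{n_k}(O₁) ∩ O₂ ≠ ∅` for all `k`. -/
def IsCesaroHyperTransitive {E : Type*} [NormedAddCommGroup E] [NormedSpace ℂ E]
    (T : E →L[ℂ] E) : Prop :=
  ∀ O₁ O₂ : Set E, IsOpen O₁ → IsOpen O₂ → O₁.Nonempty → O₂.Nonempty →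
    ∃ n : ℕ → ℕ, StrictMono n ∧ (∀ k, 1 ≤ n k) ∧
      ∀ k, ∃ f ∈ O₁, ((n k : ℂ))⁻¹ • (T ^ n k) f ∈ O₂

open Filter Topology

namespace ZeroAtInftyContinuousMap

variable {X E : Type*} [TopologicalSpace X] [NormedAddCommGroup E]

theorem norm_apply_le (f : C₀(X, E)) (x : X) : ‖f x‖ ≤ ‖f‖ :=
  f.toBCF.norm_coe_le_norm x

theorem norm_le_of_forall_le {f : C₀(X, E)} {C : ℝ} (hC : 0 ≤ C) (h : ∀ x, ‖f x‖ ≤ C) :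
    ‖f‖ ≤ C :=
  (BoundedContinuousFunction.norm_le hC).mpr h

variable [LocallyCompactSpace X] [RegularSpace X]

theorem exists_apply_eq (x₀ : X) (c : ℂ) : ∃ g : C₀(X, ℂ), g x₀ = c := by
  obtain ⟨φ, hφ, -, hφc, -⟩ := exists_continuous_one_zero_of_isCompact
    (isCompact_singleton (x := x₀)) isClosed_empty (Set.disjoint_empty _)
  have hcs : HasCompactSupport fun x => (φ x : ℂ) * c :=
    (hφc.comp_left Complex.ofReal_zero).mul_right
  refine ⟨⟨⟨fun x => (φ x : ℂ) * c, by fun_prop⟩, hcs.is_zero_at_infty⟩, ?_⟩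
  simp [show φ x₀ = 1 from hφ rfl]

theorem dense_setOf_hasCompactSupport [NormedSpace ℝ E] :
    Dense {f : C₀(X, E) | HasCompactSupport f} := by
  refine Metric.dense_iff.mpr fun f ε hε => ?_
  have hsmall : ∀ᶠ x in cocompact X, ‖f x‖ < ε / 2 :=
    (tendsto_zero_iff_norm_tendsto_zero.mp (zero_at_infty f)).eventually
      (gt_mem_nhds (by positivity))
  obtain ⟨L, hL, hLc⟩ := mem_cocompact.mp hsmall
  have hK : IsCompact {x | ε / 2 ≤ ‖f x‖} :=
    hL.of_isClosed_subset (isClosed_le continuous_const (map_continuous f).norm)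
      fun x (hx : ε / 2 ≤ ‖f x‖) => by_contra fun hxL => (hLc hxL).not_ge hx
  obtain ⟨φ, hφ, -, hφc, hφ01⟩ := exists_continuous_one_zero_of_isCompact hK
    isClosed_empty (Set.disjoint_empty _)
  have hcs : HasCompactSupport fun x => φ x • f x := hφc.smul_right
  let g : C₀(X, E) := ⟨⟨fun x => φ x • f x, by fun_prop⟩, hcs.is_zero_at_infty⟩
  refine ⟨g, ?_, hcs⟩
  rw [Metric.mem_ball, dist_eq_norm]
  refine (norm_le_of_forall_le (by positivity) fun x => ?_).trans_lt (half_lt_self hε)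
  have hgx : (g - f) x = (φ x - 1) • f x := by simp [g, sub_smul]
  rw [hgx, norm_smul]
  by_cases hx : ε / 2 ≤ ‖f x‖
  · simp only [show φ x = 1 from hφ hx, sub_self, norm_zero, zero_mul]
    positivity
  · have h1 : ‖φ x - 1‖ ≤ 1 := by
      rw [Real.norm_eq_abs, abs_le]; constructor <;> linarith [(hφ01 x).1, (hφ01 x).2]
    nlinarith [norm_nonneg (f x), norm_nonneg (φ x - 1)]

end ZeroAtInftyContinuousMap

theorem isSemiTransitive_of_dense {E : Type*} [NormedAddCommGroup E] [NormedSpace ℂ E]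
    {T : E →L[ℂ] E} {D : Set E} (hD : Dense D)
    (hzero : ∀ f ∈ D, Tendsto (fun n => (T ^ n) f) atTop (𝓝 0))
    (hpre : ∀ g ∈ D, ∃ C, ∀ n, ∃ u, (T ^ n) u = g ∧ ‖u‖ ≤ C) :
    IsSemiTransitive T := by
  intro O₁ O₂ hO₁ hO₂ hne₁ hne₂
  obtain ⟨f, hfO, hfD⟩ := hD.inter_open_nonempty O₁ hO₁ hne₁
  obtain ⟨g, hgO, hgD⟩ := hD.inter_open_nonempty O₂ hO₂ hne₂
  obtain ⟨ε₁, hε₁, hball₁⟩ := Metric.isOpen_iff.mp hO₁ f hfO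
  obtain ⟨ε₂, hε₂, hball₂⟩ := Metric.isOpen_iff.mp hO₂ g hgO
  obtain ⟨C, hC⟩ := hpre g hgD
  -- a large scalar `λ` makes the preimage of `g` small, then `n` large makes `λ T^n f` small
  set lam : ℝ := (|C| + 1) / ε₁
  have hlam : 0 < lam := by positivity
  obtain ⟨n, hn1, hn⟩ := ((eventually_ge_atTop 1).and
    ((tendsto_zero_iff_norm_tendsto_zero.mp (hzero f hfD)).eventually
      (gt_mem_nhds (div_pos hε₂ hlam)))).exists
  obtain ⟨u, hTu, hu⟩ := hC n
  refine ⟨n, lam, hn1, by exact_mod_cast hlam.ne', f + (lam : ℂ)⁻¹ • u, hball₁ ?_, hball₂ ?_⟩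
  · have : ‖(lam : ℂ)⁻¹ • u‖ < ε₁ := by
      rw [norm_smul, norm_inv, Complex.norm_real, Real.norm_of_nonneg hlam.le,
        inv_mul_lt_iff₀ hlam]
      calc ‖u‖ ≤ |C| := hu.trans (le_abs_self C)
        _ < |C| + 1 := lt_add_one _
        _ = lam * ε₁ := by simp only [lam]; field_simp
    simpa [dist_eq_norm] using this
  · have hsplit : (lam : ℂ) • (T ^ n) (f + (lam : ℂ)⁻¹ • u) = (lam : ℂ) • (T ^ n) f + g := by
      rw [map_add, map_smul, hTu, smul_add, smul_inv_smul₀ (by exact_mod_cast hlam.ne')]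
    rw [Metric.mem_ball, dist_eq_norm, hsplit, add_sub_cancel_right, norm_smul,
      Complex.norm_real, Real.norm_of_nonneg hlam.le, ← lt_div_iff₀' hlam]
    exact hn

theorem not_isCesaroHyperTransitive_of_norm_pow_apply_le {X : Type*} [TopologicalSpace X]
    [LocallyCompactSpace X] [RegularSpace X] {T : C₀(X, ℂ) →L[ℂ] C₀(X, ℂ)} (x₀ : X) (C : ℝ)
    (h : ∀ n f, ‖(T ^ n) f x₀‖ ≤ C * ‖f‖) :
    ¬ IsCesaroHyperTransitive T := by
  intro hT
  obtain ⟨g, hg⟩ := ZeroAtInftyContinuousMap.exists_apply_eq x₀ ((|C| + 2 : ℝ) : ℂ)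
  obtain ⟨n, -, hn1, hn⟩ := hT (Metric.ball 0 1) (Metric.ball g 1) Metric.isOpen_ball
    Metric.isOpen_ball ⟨0, Metric.mem_ball_self one_pos⟩ ⟨g, Metric.mem_ball_self one_pos⟩
  obtain ⟨f, hf, hfg⟩ := hn 0
  rw [mem_ball_zero_iff] at hf
  rw [Metric.mem_ball, dist_eq_norm] at hfg
  set x := ((n 0 : ℂ))⁻¹ • (T ^ n 0) f
  have hx : ‖x x₀‖ ≤ |C| := calc
    ‖x x₀‖ = (n 0 : ℝ)⁻¹ * ‖(T ^ n 0) f x₀‖ := by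
      simp [x, ZeroAtInftyContinuousMap.smul_apply]
    _ ≤ ‖(T ^ n 0) f x₀‖ :=
      mul_le_of_le_one_left (norm_nonneg _) (inv_le_one_of_one_le₀ (by exact_mod_cast hn1 0))
    _ ≤ C * ‖f‖ := h _ f
    _ ≤ |C| * ‖f‖ := mul_le_mul_of_nonneg_right (le_abs_self C) (norm_nonneg f)
    _ ≤ |C| := mul_le_of_le_one_right (abs_nonneg C) hf.le
  have hxg : ‖x x₀ - g x₀‖ < 1 :=
    (ZeroAtInftyContinuousMap.norm_apply_le (x - g) x₀).trans_lt hfg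
  have : ‖g x₀‖ = |C| + 2 := by
    rw [hg, Complex.norm_real, Real.norm_of_nonneg (by positivity)]
  linarith [norm_sub_norm_le (g x₀) (x x₀), norm_sub_rev (g x₀) (x x₀)]

def weightProd (w : ℝ → ℝ) (n : ℕ) (t : ℝ) : ℝ := ∏ j ∈ Finset.range n, w (t + j)

section weightProd

variable {w : ℝ → ℝ}

@[simp] theorem weightProd_zero (w : ℝ → ℝ) (t : ℝ) : weightProd w 0 t = 1 := rfl

theorem weightProd_add (w : ℝ → ℝ) (m n : ℕ) (t : ℝ) :
    weightProd w (m + n) t = weightProd w m t * weightProd w n (t + m) := by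
  simp only [weightProd, Finset.prod_range_add, Nat.cast_add, add_assoc]

theorem weightProd_succ (w : ℝ → ℝ) (n : ℕ) (t : ℝ) :
    weightProd w (n + 1) t = w t * weightProd w n (t + 1) := by
  rw [add_comm, weightProd_add, Nat.cast_one]; simp [weightProd]

theorem weightProd_pos (hw : ∀ t, 0 < w t) (n : ℕ) (t : ℝ) : 0 < weightProd w n t :=
  Finset.prod_pos fun _ _ => hw _

theorem weightProd_nonneg (hw : ∀ t, 0 ≤ w t) (n : ℕ) (t : ℝ) : 0 ≤ weightProd w n t :=
  Finset.prod_nonneg fun _ _ => hw _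

theorem continuous_weightProd (hw : Continuous w) (n : ℕ) : Continuous (weightProd w n) :=
  continuous_finsetProd _ fun _ _ => hw.comp (by fun_prop)

theorem weightProd_le_pow {n : ℕ} {t b : ℝ} (hw : ∀ t, 0 ≤ w t)
    (h : ∀ j : ℕ, j < n → w (t + j) ≤ b) :
    weightProd w n t ≤ b ^ n := by
  simpa [weightProd] using
    Finset.prod_le_prod (fun _ _ => hw _) (fun j hj => h j (Finset.mem_range.mp hj))

theorem pow_le_weightProd {n : ℕ} {t b : ℝ} (hb : 0 ≤ b)
    (h : ∀ j : ℕ, j < n → b ≤ w (t + j)) :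
    b ^ n ≤ weightProd w n t := by
  simpa [weightProd] using
    Finset.prod_le_prod (fun _ _ => hb) (fun j hj => h j (Finset.mem_range.mp hj))

theorem weightProd_eq_one {K t : ℝ} (h : ∀ s ≥ K, w s = 1) (ht : K ≤ t) (n : ℕ) :
    weightProd w n t = 1 :=
  Finset.prod_eq_one fun j _ => h _ (by linarith [j.cast_nonneg (α := ℝ)])

theorem exists_weightProd_le_mul_pow {W r K₁ : ℝ} (hw : ∀ t, 0 ≤ w t) (hW : ∀ t, w t ≤ W)
    (hr : ∀ t ≤ -K₁, w t ≤ r) (hr0 : 0 < r) (hrW : r ≤ W) (b : ℝ) :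
    ∃ C, 0 ≤ C ∧ ∀ (n : ℕ) (t : ℝ), t + n ≤ b → weightProd w n t ≤ C * r ^ n := by
  -- of the factors of a window ending at `b`, all but the last `⌈b + K₁⌉₊` lie left of `-K₁`
  set N := ⌈b + K₁⌉₊
  refine ⟨(W / r) ^ N, pow_nonneg (div_nonneg (hr0.le.trans hrW) hr0.le) N, fun n t ht => ?_⟩
  obtain ⟨k, l, rfl, hl, hkl⟩ : ∃ k l : ℕ, n = k + l ∧ l ≤ N ∧ (0 < k → l = N) :=
    ⟨n - N, min n N, by omega, min_le_right _ _, by omega⟩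
  have hk : ∀ j : ℕ, j < k → w (t + j) ≤ r := fun j hj => hr _ (by
    have hj' : (j : ℝ) + 1 ≤ k := by exact_mod_cast Nat.succ_le_of_lt hj
    rw [hkl (by omega)] at ht
    push_cast at ht
    linarith [Nat.le_ceil (b + K₁)])
  calc weightProd w (k + l) t = weightProd w k t * weightProd w l (t + k) :=
        weightProd_add w k l t
    _ ≤ r ^ k * W ^ l :=
        mul_le_mul (weightProd_le_pow hw hk) (weightProd_le_pow hw fun _ _ => hW _)
          (weightProd_nonneg hw l _) (pow_nonneg hr0.le k)
    _ = (W / r) ^ l * r ^ (k + l) := by rw [div_pow, pow_add]; field_simp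
    _ ≤ (W / r) ^ N * r ^ (k + l) := by
        gcongr
        exact (one_le_div hr0).mpr hrW

theorem exists_pos_le_weightProd (hw : Continuous w) (hpos : ∀ t, 0 < w t) {K : ℝ}
    (h1 : ∀ s ≥ K, w s = 1) (a : ℝ) :
    ∃ c > 0, ∀ (n : ℕ) (s : ℝ), a ≤ s → c ≤ weightProd w n s := by
  obtain ⟨x₀, -, hmin⟩ := isCompact_Icc.exists_isMinOn
    (Set.nonempty_Icc.mpr (le_max_left a K)) hw.continuousOn
  set m := min (w x₀) 1
  have hm0 : 0 < m := lt_min (hpos x₀) one_pos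
  have hm : ∀ s, a ≤ s → m ≤ w s := fun s hs => by
    rcases le_or_gt s (max a K) with hsK | hsK
    · exact (min_le_left _ _).trans (hmin ⟨hs, hsK⟩)
    · exact (min_le_right _ _).trans (h1 s (le_max_right a K |>.trans hsK.le)).ge
  set N := ⌈K - a⌉₊
  refine ⟨m ^ N, pow_pos hm0 N, fun n s hs => ?_⟩
  obtain ⟨k, l, rfl, hk, hkl⟩ : ∃ k l : ℕ, n = k + l ∧ k ≤ N ∧ (0 < l → k = N) :=
    ⟨min n N, n - N, by omega, min_le_right _ _, by omega⟩
  -- after `N` steps the window has passed `K`, where all factors equal `1`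
  have htail : weightProd w l (s + k) = 1 := by
    rcases Nat.eq_zero_or_pos l with rfl | hl
    · rfl
    · exact weightProd_eq_one h1 (by rw [hkl hl]; linarith [Nat.le_ceil (K - a)]) l
  calc m ^ N ≤ m ^ k := pow_le_pow_of_le_one hm0.le (min_le_right _ _) hk
    _ ≤ weightProd w k s :=
        pow_le_weightProd hm0.le fun j _ => hm _ (by linarith [j.cast_nonneg (α := ℝ)])
    _ = weightProd w (k + l) s := by rw [weightProd_add, htail, mul_one]

end weightProd

section WeightedShift

variable {w : ℝ → ℝ} {T : C₀(ℝ, ℂ) →L[ℂ] C₀(ℝ, ℂ)}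

theorem pow_apply_eq_weightProd_mul
    (hT : ∀ (f : C₀(ℝ, ℂ)) (t : ℝ), T f t = (w t : ℂ) * f (t + 1)) (n : ℕ) (f : C₀(ℝ, ℂ)) (t : ℝ) :
    (T ^ n) f t = weightProd w n t * f (t + n) := by
  induction n generalizing t with
  | zero => simp
  | succ n ih =>
    rw [pow_succ', mul_apply_eq_comp, hT, ih, weightProd_succ]
    push_cast
    ring_nf

theorem tendsto_pow_apply_of_hasCompactSupport
    (hT : ∀ (f : C₀(ℝ, ℂ)) (t : ℝ), T f t = (w t : ℂ) * f (t + 1)) (hw : ∀ t, 0 ≤ w t) {W r K₁ : ℝ}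
    (hW : ∀ t, w t ≤ W) (hr : ∀ t ≤ -K₁, w t ≤ r) (hr0 : 0 < r) (hr1 : r < 1)
    {f : C₀(ℝ, ℂ)} (hf : HasCompactSupport f) :
    Tendsto (fun n => (T ^ n) f) atTop (𝓝 0) := by
  obtain ⟨b, hb⟩ := hf.isCompact.bddAbove
  obtain ⟨C, hC0, hC⟩ := exists_weightProd_le_mul_pow hw
    (fun t => (hW t).trans (le_max_left W r)) hr hr0 (le_max_right W r) b
  refine squeeze_zero_norm (a := fun n => C * r ^ n * ‖f‖) (fun n =>
    ZeroAtInftyContinuousMap.norm_le_of_forall_le (by positivity) fun t => ?_) ?_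
  · rw [pow_apply_eq_weightProd_mul hT, norm_mul, Complex.norm_real,
      Real.norm_of_nonneg (weightProd_nonneg hw n t)]
    by_cases hft : f (t + n) = 0
    · rw [hft, norm_zero, mul_zero]; positivity
    · exact mul_le_mul (hC n t (hb (subset_tsupport _ hft)))
        (ZeroAtInftyContinuousMap.norm_apply_le f _) (norm_nonneg _) (by positivity)
  · simpa using ((tendsto_pow_atTop_nhds_zero_of_lt_one hr0.le hr1).const_mul C).mul_const ‖f‖

theorem exists_bounded_pow_preimage_of_hasCompactSupport
    (hT : ∀ (f : C₀(ℝ, ℂ)) (t : ℝ), T f t = (w t : ℂ) * f (t + 1)) (hw : Continuous w)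
    (hpos : ∀ t, 0 < w t) {K : ℝ} (h1 : ∀ s ≥ K, w s = 1) {g : C₀(ℝ, ℂ)}
    (hg : HasCompactSupport g) :
    ∃ C, ∀ n, ∃ u, (T ^ n) u = g ∧ ‖u‖ ≤ C := by
  obtain ⟨a, ha⟩ := hg.isCompact.bddBelow
  obtain ⟨c, hc, hcP⟩ := exists_pos_le_weightProd hw hpos h1 a
  refine ⟨‖g‖ / c, fun n => ?_⟩
  have hP : ∀ s, (weightProd w n s : ℂ) ≠ 0 := fun s =>
    Complex.ofReal_ne_zero.mpr (weightProd_pos hpos n s).ne'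
  set v : ℝ → ℂ := fun s => g s / weightProd w n s
  have hv : HasCompactSupport v :=
    hg.mono fun s hs hgs => hs (by simp [v, hgs])
  let u : C₀(ℝ, ℂ) := ⟨⟨fun t => v (t - n), by
    refine ((map_continuous g).div ?_ fun s => hP s).comp (continuous_sub_right (n : ℝ))
    exact Complex.continuous_ofReal.comp (continuous_weightProd hw n)⟩,
    (hv.comp_homeomorph (Homeomorph.subRight (n : ℝ))).is_zero_at_infty⟩
  refine ⟨u, ZeroAtInftyContinuousMap.ext fun t => ?_,
    ZeroAtInftyContinuousMap.norm_le_of_forall_le (by positivity) fun t => ?_⟩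
  · rw [pow_apply_eq_weightProd_mul hT]
    show _ * (g (t + n - n) / _) = _
    rw [add_sub_cancel_right, mul_div_cancel₀ _ (hP t)]
  · show ‖g (t - n) / weightProd w n (t - n)‖ ≤ _
    rw [norm_div, Complex.norm_real, Real.norm_of_nonneg (weightProd_pos hpos n _).le]
    by_cases hgt : g (t - n) = 0
    · rw [hgt, norm_zero, zero_div]; positivity
    · exact div_le_div₀ (norm_nonneg _) (ZeroAtInftyContinuousMap.norm_apply_le g _) hc
        (hcP n _ (ha (subset_tsupport _ hgt)))

theorem norm_pow_apply_le_of_weight_eq_one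
    (hT : ∀ (f : C₀(ℝ, ℂ)) (t : ℝ), T f t = (w t : ℂ) * f (t + 1)) {K : ℝ}
    (h1 : ∀ s ≥ K, w s = 1) (n : ℕ) (f : C₀(ℝ, ℂ)) : ‖(T ^ n) f K‖ ≤ ‖f‖ := by
  rw [pow_apply_eq_weightProd_mul hT, weightProd_eq_one h1 le_rfl, Complex.ofReal_one, one_mul]
  exact ZeroAtInftyContinuousMap.norm_apply_le f _

end WeightedShift

theorem semi_transitive_not_cesaro_of_weight_general
    (w : ℝ → ℝ) (hw_cont : Continuous w) (hw_pos : ∀ t, 0 < w t)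
    (hw_bdd : ∃ C, ∀ t, w t ≤ C)
    (M δ K₁ K₂ : ℝ)
    (hMδ : 1 < M - δ)
    (hlow : ∀ t ≤ -K₁, 1 / M ≤ w t ∧ w t ≤ 1 / (M - δ))
    (hhigh : ∀ t ≥ K₂, w t = 1)
    (T : C₀(ℝ, ℂ) →L[ℂ] C₀(ℝ, ℂ))
    (hT : ∀ (f : C₀(ℝ, ℂ)) (t : ℝ), T f t = (w t : ℂ) * f (t + 1)) :
    IsSemiTransitive T ∧ ¬ IsCesaroHyperTransitive T := by
  obtain ⟨W, hW⟩ := hw_bdd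
  have hr0 : 0 < 1 / (M - δ) := one_div_pos.mpr (by linarith)
  have hr1 : 1 / (M - δ) < 1 := (div_lt_one (by linarith)).mpr hMδ
  exact ⟨isSemiTransitive_of_dense ZeroAtInftyContinuousMap.dense_setOf_hasCompactSupport
      (fun f hf => tendsto_pow_apply_of_hasCompactSupport hT (fun t => (hw_pos t).le) hW
        (fun t ht => (hlow t ht).2) hr0 hr1 hf)
      (fun g hg => exists_bounded_pow_preimage_of_hasCompactSupport hT hw_cont hw_pos hhigh hg),
    not_isCesaroHyperTransitive_of_norm_pow_apply_le K₂ 1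
      fun n f => by simpa using norm_pow_apply_le_of_weight_eq_one hT hhigh n f⟩

theorem semi_transitive_not_cesaro_of_weight
    (w : ℝ → ℝ) (hw_cont : Continuous w) (hw_pos : ∀ t, 0 < w t)
    (hw_bdd : ∃ C, ∀ t, w t ≤ C)
    (M δ K₁ K₂ : ℝ) (hM : 0 < M) (hδ : 0 < δ) (hK₁ : 0 < K₁) (hK₂ : 0 < K₂)
    (hMδ : 1 < M - δ)
    (hlow : ∀ t ≤ -K₁, 1 / M ≤ w t ∧ w t ≤ 1 / (M - δ))
    (hhigh : ∀ t ≥ K₂, w t = 1)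
    (T : C₀(ℝ, ℂ) →L[ℂ] C₀(ℝ, ℂ))
    (hT : ∀ (f : C₀(ℝ, ℂ)) (t : ℝ), T f t = (w t : ℂ) * f (t + 1)) :
    IsSemiTransitive T ∧ ¬ IsCesaroHyperTransitive T :=
  semi_transitive_not_cesaro_of_weight_general w hw_cont hw_pos hw_bdd M δ K₁ K₂ hMδ hlow hhigh T hT
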